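/- arXiv:2307.07806 — 7 statements merged into one kernel-verified Lean document; each statement's English description precedes it below -/
import Mathlib

section
/- Let n,K ≥ 1, let z_1,…,z_K ∈ ℂ with |z_k| = 1, let b ∈ ℝ^K with b_k ≥ 0, and let φ ∈ ℂ^K. Define x ∈ ℂ^{2n−1} by x_j = Σ_{k=1}^K b_k φ_k z_k^{j−1} and t ∈ ℂ^n by t_j = Σ_{k=1}^K b_k z_k^{j−1}. Then the 2n×2n block matrix 𝓜(x,t) equals the product [[conj(V), 0],[0, V]] · [[diag(b), diag(b_k conj(φ_k))],[diag(b_k φ_k), diag(b)]] · [[conj(V), 0],[0, V]]^H, where conj(V) is the entrywise conjugate of V. -/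
open Matrix
open scoped ComplexOrder

/-- The Hankel operator: maps `x ∈ ℂ^(2n-1)` to the `n × n` matrix with
`(𝓗x)_{i,j} = x_{i+j-1}` (1-based indexing). -/
noncomputable def hankelOp (n : ℕ) (x : Fin (2 * n - 1) → ℂ) :
    Matrix (Fin n) (Fin n) ℂ :=
  Matrix.of fun i j => x ⟨i.val + j.val, by have hi := i.isLt; have hj := j.isLt; omega⟩

/-- The Hermitian Toeplitz operator: maps `t ∈ ℂ^n` to the `n × n` matrix with
`(𝓣t)_{i,j} = t_{i-j+1}` for `i ≥ j` and `(𝓣t)_{i,j} = conj (t_{j-i+1})` for `i < j`. -/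
noncomputable def toeplitzOp (n : ℕ) (t : Fin n → ℂ) : Matrix (Fin n) (Fin n) ℂ :=
  Matrix.of fun i j =>
    if j.val ≤ i.val then t ⟨i.val - j.val, by have hi := i.isLt; omega⟩
    else star (t ⟨j.val - i.val, by have hj := j.isLt; omega⟩)

/-- The `2n × 2n` Hankel-Toeplitz block matrix `𝓜(x,t) = [[𝓣(conj t), 𝓗(conj x)],[𝓗x, 𝓣t]]`. -/
noncomputable def blockM (n : ℕ) (x : Fin (2 * n - 1) → ℂ) (t : Fin n → ℂ) :
    Matrix (Fin n ⊕ Fin n) (Fin n ⊕ Fin n) ℂ :=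
  Matrix.fromBlocks (toeplitzOp n fun j => star (t j)) (hankelOp n fun j => star (x j))
    (hankelOp n x) (toeplitzOp n t)

/-- The Vandermonde-type matrix `V ∈ ℂ^{n×K}` with `V_{j,k} = z_k^{j-1}` (1-based). -/
noncomputable def vand (n K : ℕ) (z : Fin K → ℂ) : Matrix (Fin n) (Fin K) ℂ :=
  Matrix.of fun j k => z k ^ (j : ℕ)

/-! Multiplying out, the blocks of the product are `V̄ D_b V̄ᴴ`, `V̄ D_{b φ̄} Vᴴ`, `V D_{b φ} V̄ᴴ`
and `V D_b Vᴴ`. Since `V̄ᴴ = Vᵀ`, the off-diagonal blocks have the form `W D_c Wᵀ`, whose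
`(i, j)` entry `∑ c_k w_k^(i+j)` depends only on `i + j`: they are Hankel.
On the unit circle `z̄ = z⁻¹`, so the `(i, j)` entry `∑ b_k z_k^i z̄_k^j = ∑ b_k z_k^(i-j)` of a
diagonal block depends only on `i - j`, and real weights make it Hermitian Toeplitz. -/

noncomputable def powerSum {K : ℕ} (c z : Fin K → ℂ) (m : ℕ) : ℂ :=
  ∑ k, c k * z k ^ m

lemma star_powerSum {K : ℕ} (c z : Fin K → ℂ) (m : ℕ) :
    star (powerSum c z m) = powerSum (star c) (star z) m := by
  simp only [powerSum, star_sum, star_mul', star_pow, Pi.star_apply]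

lemma star_fun_ofReal {K : ℕ} (b : Fin K → ℝ) :
    star (fun k => (b k : ℂ)) = fun k => (b k : ℂ) :=
  funext fun k => Complex.conj_ofReal (b k)

section Vandermonde

variable {n K : ℕ}

lemma vand_map_star (z : Fin K → ℂ) : (vand n K z).map star = vand n K (star z) := by
  ext j k
  simp [vand]

lemma vand_conjTranspose (z : Fin K → ℂ) : (vand n K z)ᴴ = (vand n K (star z))ᵀ := by
  rw [conjTranspose, transpose_map, vand_map_star]

lemma vand_mul_diagonal_mul_vand_transpose (c z : Fin K → ℂ) :
    vand n K z * diagonal c * (vand n K z)ᵀ = hankelOp n fun j => powerSum c z j := by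
  ext i j
  rw [mul_apply]
  simp only [mul_diagonal, transpose_apply, vand, hankelOp, powerSum, of_apply]
  refine Finset.sum_congr rfl fun k _ => ?_
  ring

lemma vand_mul_diagonal_mul_vand_conjTranspose (b : Fin K → ℝ) {z : Fin K → ℂ}
    (hz : ∀ k, ‖z k‖ = 1) :
    vand n K z * diagonal (fun k => (b k : ℂ)) * (vand n K z)ᴴ
      = toeplitzOp n fun j => powerSum (fun k => (b k : ℂ)) z j := by
  ext i j
  have hz0 : ∀ k, z k ≠ 0 := fun k h => by simpa [h] using hz k
  have hstar : ∀ k, star (z k) = (z k)⁻¹ := fun k => (Complex.inv_eq_conj (hz k)).symm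
  rw [mul_apply]
  simp only [mul_diagonal, conjTranspose_apply, vand, toeplitzOp, of_apply]
  split_ifs with hji
  · refine Finset.sum_congr rfl fun k _ => ?_
    rw [star_pow, hstar, inv_pow, pow_sub₀ _ (hz0 k) hji]
    ring
  · rw [star_powerSum, star_fun_ofReal]
    refine Finset.sum_congr rfl fun k _ => ?_
    simp only [Pi.star_apply, star_pow, hstar, inv_pow]
    rw [pow_sub₀ _ (hz0 k) (le_of_not_ge hji), mul_inv, inv_inv]
    ring

end Vandermonde

theorem blockM_factorization_general
    (n K : ℕ)
    (z : Fin K → ℂ) (hz : ∀ k, ‖z k‖ = 1)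
    (b : Fin K → ℝ)
    (φ : Fin K → ℂ)
    (x : Fin (2 * n - 1) → ℂ)
    (hx : ∀ j : Fin (2 * n - 1), x j = ∑ k : Fin K, (b k : ℂ) * φ k * z k ^ (j : ℕ))
    (t : Fin n → ℂ)
    (ht : ∀ j : Fin n, t j = ∑ k : Fin K, (b k : ℂ) * z k ^ (j : ℕ)) :
    blockM n x t
      = Matrix.fromBlocks ((vand n K z).map star) 0 0 (vand n K z)
        * Matrix.fromBlocks
            (Matrix.diagonal fun k => (b k : ℂ))
            (Matrix.diagonal fun k => (b k : ℂ) * star (φ k))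
            (Matrix.diagonal fun k => (b k : ℂ) * φ k)
            (Matrix.diagonal fun k => (b k : ℂ))
        * (Matrix.fromBlocks ((vand n K z).map star) 0 0 (vand n K z))ᴴ := by
  obtain rfl : x = fun j : Fin _ => powerSum (fun k => (b k : ℂ) * φ k) z j := funext hx
  obtain rfl : t = fun j : Fin _ => powerSum (fun k => (b k : ℂ)) z j := funext ht
  have hz' : ∀ k, ‖star z k‖ = 1 := fun k => (norm_star (z k)).trans (hz k)
  have hbφ : star (fun k => (b k : ℂ) * φ k) = fun k => (b k : ℂ) * star (φ k) :=
    funext fun k => by simp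
  rw [fromBlocks_conjTranspose, fromBlocks_multiply, fromBlocks_multiply, vand_map_star]
  simp only [Matrix.zero_mul, Matrix.mul_zero, add_zero, zero_add, conjTranspose_zero]
  rw [vand_mul_diagonal_mul_vand_conjTranspose b hz',
    vand_mul_diagonal_mul_vand_conjTranspose b hz, vand_conjTranspose z,
    vand_conjTranspose (star z), star_star, vand_mul_diagonal_mul_vand_transpose,
    vand_mul_diagonal_mul_vand_transpose, ← hbφ]
  simp only [blockM, star_powerSum, star_fun_ofReal]

theorem blockM_factorization
    (n K : ℕ) (hn : 1 ≤ n) (hK : 1 ≤ K)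
    (z : Fin K → ℂ) (hz : ∀ k, ‖z k‖ = 1)
    (b : Fin K → ℝ) (hb : ∀ k, 0 ≤ b k)
    (φ : Fin K → ℂ)
    (x : Fin (2 * n - 1) → ℂ)
    (hx : ∀ j : Fin (2 * n - 1), x j = ∑ k : Fin K, (b k : ℂ) * φ k * z k ^ (j : ℕ))
    (t : Fin n → ℂ)
    (ht : ∀ j : Fin n, t j = ∑ k : Fin K, (b k : ℂ) * z k ^ (j : ℕ)) :
    blockM n x t
      = Matrix.fromBlocks ((vand n K z).map star) 0 0 (vand n K z)
        * Matrix.fromBlocks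
            (Matrix.diagonal fun k => (b k : ℂ))
            (Matrix.diagonal fun k => (b k : ℂ) * star (φ k))
            (Matrix.diagonal fun k => (b k : ℂ) * φ k)
            (Matrix.diagonal fun k => (b k : ℂ))
        * (Matrix.fromBlocks ((vand n K z).map star) 0 0 (vand n K z))ᴴ :=
  blockM_factorization_general n K z hz b φ x hx t ht
end

section
/- Let n,K ≥ 1, let z_1,…,z_K ∈ ℂ with |z_k| = 1, let b ∈ ℝ^K with b_k ≥ 0, and let φ ∈ ℂ^K with |φ_k| ≤ 1 for all k. Define x ∈ ℂ^{2n−1} by x_j = Σ_{k=1}^K b_k φ_k z_k^{j−1} and t ∈ ℂ^n by t_j = Σ_{k=1}^K b_k z_k^{j−1}. Then the 2n×2n block matrix 𝓜(x,t) is positive semidefinite. -/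
/-!
Both `𝓗` and `𝓣` are real-linear, so `𝓜(x,t) = ∑ₖ bₖ 𝓜(φₖ zₖ^·, zₖ^·)` and it suffices to treat a
single atom. For `|z| = 1` we have `z̄ = z⁻¹`, hence `𝓣(z^·)_{ij} = z^i z̄^j` and `𝓗(φ z^·)_{ij} = φ z^i z^j`:
the atom is the Hadamard product of the rank-one matrix `u uᴴ`, `u = (z̄^i, z^i)`, with the 2 × 2 block
pattern `[[1, φ̄], [φ, 1]]`, which is positive semidefinite for `|φ| ≤ 1`. Schur's product theorem
concludes.
-/

open Matrix
open scoped ComplexOrder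

open scoped ComplexConjugate

lemma toeplitzOp_pow_apply {n : ℕ} {z : ℂ} (hz : ‖z‖ = 1) (i j : Fin n) :
    toeplitzOp n (fun j => z ^ (j : ℕ)) i j = z ^ (i : ℕ) * star z ^ (j : ℕ) := by
  have hzz : z * star z = 1 := by
    rw [Complex.star_def, Complex.mul_conj, Complex.normSq_eq_norm_sq, hz]; norm_num
  simp only [toeplitzOp, of_apply]
  split_ifs with hji
  · conv_rhs => rw [← Nat.sub_add_cancel hji, pow_add, mul_assoc, ← mul_pow, hzz, one_pow,
      mul_one]
  · rw [star_pow]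
    conv_rhs => rw [← Nat.sub_add_cancel (le_of_not_ge hji), pow_add (star z), mul_left_comm,
      ← mul_pow, hzz, one_pow, mul_one]

lemma posSemidef_fin_two_of_norm_le_one {φ : ℂ} (hφ : ‖φ‖ ≤ 1) :
    (!![1, star φ; φ, 1] : Matrix (Fin 2) (Fin 2) ℂ).PosSemidef := by
  let r : ℂ := Real.sqrt (1 - ‖φ‖ ^ 2)
  have hr : φ * conj φ + conj r * r = 1 := by
    have h0 : (0 : ℝ) ≤ 1 - ‖φ‖ ^ 2 := by nlinarith [norm_nonneg φ]
    rw [Complex.mul_conj, Complex.conj_ofReal, ← Complex.ofReal_mul, Real.mul_self_sqrt h0,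
      Complex.normSq_eq_norm_sq]
    push_cast; ring
  convert posSemidef_conjTranspose_mul_self !![1, star φ; 0, r] using 1
  ext i j
  fin_cases i <;> fin_cases j <;> simp [Matrix.mul_apply, Fin.sum_univ_two]
  exact hr.symm

lemma blockM_pow_posSemidef {n : ℕ} {z φ : ℂ} (hz : ‖z‖ = 1) (hφ : ‖φ‖ ≤ 1) :
    (blockM n (fun j => φ * z ^ (j : ℕ)) (fun j => z ^ (j : ℕ))).PosSemidef := by
  set u : Fin n ⊕ Fin n → ℂ := Sum.elim (fun i => star z ^ (i : ℕ)) (fun i => z ^ (i : ℕ))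
  set side : Fin n ⊕ Fin n → Fin 2 := Sum.elim (fun _ => 0) (fun _ => 1)
  have h : blockM n (fun j => φ * z ^ (j : ℕ)) (fun j => z ^ (j : ℕ)) =
      (!![1, star φ; φ, 1] : Matrix (Fin 2) (Fin 2) ℂ).submatrix side side ⊙
        vecMulVec u (star u) := by
    ext (i | i) (j | j)
    · simp only [blockM, fromBlocks_apply₁₁, star_pow]
      rw [toeplitzOp_pow_apply (by rwa [norm_star])]
      simp [u, side, vecMulVec_apply]
    · simp [blockM, u, side, hankelOp, vecMulVec_apply, pow_add]
    · simp [blockM, u, side, hankelOp, vecMulVec_apply, pow_add]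
    · simp only [blockM, fromBlocks_apply₂₂]
      rw [toeplitzOp_pow_apply hz]
      simp [u, side, vecMulVec_apply]
  rw [h]
  exact ((posSemidef_fin_two_of_norm_le_one hφ).submatrix side).hadamard
    (posSemidef_vecMulVec_self_star u)

lemma blockM_sum_smul {n : ℕ} {ι : Type*} (s : Finset ι) (c : ι → ℝ)
    (x : ι → Fin (2 * n - 1) → ℂ) (t : ι → Fin n → ℂ) :
    blockM n (fun j => ∑ k ∈ s, (c k : ℂ) * x k j) (fun j => ∑ k ∈ s, (c k : ℂ) * t k j) =
      ∑ k ∈ s, c k • blockM n (x k) (t k) := by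
  ext (i | i) (j | j) <;>
    simp [blockM, toeplitzOp, hankelOp, Matrix.sum_apply, star_sum]

theorem blockM_posSemidef_general
    (n K : ℕ)
    (z : Fin K → ℂ) (hz : ∀ k, ‖z k‖ = 1)
    (b : Fin K → ℝ) (hb : ∀ k, 0 ≤ b k)
    (φ : Fin K → ℂ) (hφ : ∀ k, ‖φ k‖ ≤ 1)
    (x : Fin (2 * n - 1) → ℂ)
    (hx : ∀ j : Fin (2 * n - 1), x j = ∑ k : Fin K, (b k : ℂ) * φ k * z k ^ (j : ℕ))
    (t : Fin n → ℂ)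
    (ht : ∀ j : Fin n, t j = ∑ k : Fin K, (b k : ℂ) * z k ^ (j : ℕ)) :
    (blockM n x t).PosSemidef := by
  have hx' : x = fun j : Fin (2 * n - 1) => ∑ k, (b k : ℂ) * (φ k * z k ^ (j : ℕ)) := by
    funext j; simp only [hx, mul_assoc]
  rw [hx', funext ht, blockM_sum_smul]
  exact posSemidef_sum _ fun k _ => (blockM_pow_posSemidef (hz k) (hφ k)).smul (hb k)

theorem blockM_posSemidef
    (n K : ℕ) (hn : 1 ≤ n) (hK : 1 ≤ K)
    (z : Fin K → ℂ) (hz : ∀ k, ‖z k‖ = 1)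
    (b : Fin K → ℝ) (hb : ∀ k, 0 ≤ b k)
    (φ : Fin K → ℂ) (hφ : ∀ k, ‖φ k‖ ≤ 1)
    (x : Fin (2 * n - 1) → ℂ)
    (hx : ∀ j : Fin (2 * n - 1), x j = ∑ k : Fin K, (b k : ℂ) * φ k * z k ^ (j : ℕ))
    (t : Fin n → ℂ)
    (ht : ∀ j : Fin n, t j = ∑ k : Fin K, (b k : ℂ) * z k ^ (j : ℕ)) :
    (blockM n x t).PosSemidef :=
  blockM_posSemidef_general n K z hz b hb φ hφ x hx t ht
end

section
/- Let n,K ≥ 1, let z_1,…,z_K ∈ ℂ with |z_k| = 1, let b ∈ ℝ^K with b_k ≥ 0, and let φ ∈ ℂ^K with |φ_k| = 1 for all k. Define x ∈ ℂ^{2n−1} by x_j = Σ_{k=1}^K b_k φ_k z_k^{j−1} and t ∈ ℂ^n by t_j = Σ_{k=1}^K b_k z_k^{j−1}. Then rank(𝓜(x,t)) ≤ K. -/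
/-!
For `‖z‖ = 1` the Toeplitz matrix of the powers of `z` is the rank-one matrix `(z^i * conj z^j)`,
because `conj z = z⁻¹`; the Hankel matrix of `(c * z^j)` is the rank-one matrix `(c * z^i * z^j)`.
Both operators are real-linear, so with `u_k = (conj z_k^i ; φ_k z_k^i)` one gets
`𝓜(x,t) = ∑ₖ b_k u_k u_kᴴ`, where `‖φ_k‖ = 1` makes the factor `φ_k conj φ_k` of the lower right
block disappear. A sum of `K` rank-one matrices has rank at most `K`.
-/

open Matrix
open scoped ComplexOrder

namespace Matrix

theorem rank_sum_vecMulVec_le {m n ι R : Type*} [Fintype m] [Fintype n] [Fintype ι]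
    [CommRing R] [StrongRankCondition R] (u : ι → m → R) (v : ι → n → R) :
    (∑ k, vecMulVec (u k) (v k)).rank ≤ Fintype.card ι := by
  have hfactor : ∑ k, vecMulVec (u k) (v k) = of (fun i k => u k i) * of v := by
    ext i j
    simp [mul_apply, vecMulVec_apply, sum_apply]
  rw [hfactor]
  exact (rank_mul_le_left _ _).trans (rank_le_card_width _)

end Matrix

theorem toeplitzOp_pow_of_norm_eq_one (n : ℕ) {w : ℂ} (hw : ‖w‖ = 1) :
    toeplitzOp n (fun j => w ^ (j : ℕ)) =
      vecMulVec (fun i : Fin n => w ^ (i : ℕ)) (fun j : Fin n => star w ^ (j : ℕ)) := by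
  have hw0 : w ≠ 0 := norm_ne_zero_iff.mp (by simp [hw])
  have hinv : star w = w⁻¹ := (Complex.inv_eq_conj hw).symm
  ext i j
  simp only [toeplitzOp, of_apply, vecMulVec_apply, hinv, inv_pow, star_pow]
  split_ifs with h
  · exact pow_sub₀ w hw0 h
  · rw [pow_sub₀ w hw0 (by omega), mul_inv, inv_inv, mul_comm]

theorem hankelOp_pow (n : ℕ) (c w : ℂ) :
    hankelOp n (fun j => c * w ^ (j : ℕ)) =
      vecMulVec (fun i : Fin n => c * w ^ (i : ℕ)) (fun j : Fin n => w ^ (j : ℕ)) := by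
  ext i j
  simp [hankelOp, vecMulVec_apply, pow_add, mul_assoc]

theorem blockM_sum_ofReal_smul (n : ℕ) {ι : Type*} [Fintype ι] (b : ι → ℝ)
    (x : ι → Fin (2 * n - 1) → ℂ) (t : ι → Fin n → ℂ) :
    blockM n (∑ k, (b k : ℂ) • x k) (∑ k, (b k : ℂ) • t k) =
      ∑ k, (b k : ℂ) • blockM n (x k) (t k) := by
  ext (i | i) (j | j) <;> by_cases hji : (j : ℕ) ≤ i <;>
    simp [blockM, toeplitzOp, hankelOp, hji, Matrix.sum_apply, Finset.sum_apply, star_sum]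

def blockMVec (n : ℕ) (φ z : ℂ) : Fin n ⊕ Fin n → ℂ :=
  Sum.elim (fun i => star z ^ (i : ℕ)) (fun i => φ * z ^ (i : ℕ))

theorem blockM_pow_of_norm_eq_one (n : ℕ) {z φ : ℂ} (hz : ‖z‖ = 1) (hφ : ‖φ‖ = 1) :
    blockM n (fun j => φ * z ^ (j : ℕ)) (fun j => z ^ (j : ℕ)) =
      vecMulVec (blockMVec n φ z) (star (blockMVec n φ z)) := by
  have hz' : ‖star z‖ = 1 := by rwa [norm_star]
  have hφφ : φ * star φ = 1 := by simp [Complex.mul_conj', hφ]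
  simp only [blockM, star_mul', star_pow]
  rw [toeplitzOp_pow_of_norm_eq_one n hz', toeplitzOp_pow_of_norm_eq_one n hz, hankelOp_pow,
    hankelOp_pow]
  ext (i | i) (j | j) <;>
    simp only [fromBlocks_apply₁₁, fromBlocks_apply₁₂, fromBlocks_apply₂₁, fromBlocks_apply₂₂,
      vecMulVec_apply, blockMVec, Pi.star_apply, Sum.elim_inl, Sum.elim_inr, star_mul', star_pow,
      star_star]
  case inr.inr => linear_combination -(z ^ (i : ℕ) * star z ^ (j : ℕ)) * hφφ
  all_goals ring

theorem blockM_rank_le_general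
    (n K : ℕ)
    (z : Fin K → ℂ) (hz : ∀ k, ‖z k‖ = 1)
    (b : Fin K → ℝ)
    (φ : Fin K → ℂ) (hφ : ∀ k, ‖φ k‖ = 1)
    (x : Fin (2 * n - 1) → ℂ)
    (hx : ∀ j : Fin (2 * n - 1), x j = ∑ k : Fin K, (b k : ℂ) * φ k * z k ^ (j : ℕ))
    (t : Fin n → ℂ)
    (ht : ∀ j : Fin n, t j = ∑ k : Fin K, (b k : ℂ) * z k ^ (j : ℕ)) :
    (blockM n x t).rank ≤ K := by
  have hx' : x = ∑ k, (b k : ℂ) • fun j : Fin (2 * n - 1) => φ k * z k ^ (j : ℕ) := by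
    ext j; simp [hx, mul_assoc]
  have ht' : t = ∑ k, (b k : ℂ) • fun j : Fin n => z k ^ (j : ℕ) := by
    ext j; simp [ht]
  rw [hx', ht', blockM_sum_ofReal_smul]
  simp_rw [blockM_pow_of_norm_eq_one n (hz _) (hφ _), ← smul_vecMulVec]
  exact (Matrix.rank_sum_vecMulVec_le _ _).trans_eq (Fintype.card_fin K)

theorem blockM_rank_le
    (n K : ℕ) (hn : 1 ≤ n) (hK : 1 ≤ K)
    (z : Fin K → ℂ) (hz : ∀ k, ‖z k‖ = 1)
    (b : Fin K → ℝ) (hb : ∀ k, 0 ≤ b k)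
    (φ : Fin K → ℂ) (hφ : ∀ k, ‖φ k‖ = 1)
    (x : Fin (2 * n - 1) → ℂ)
    (hx : ∀ j : Fin (2 * n - 1), x j = ∑ k : Fin K, (b k : ℂ) * φ k * z k ^ (j : ℕ))
    (t : Fin n → ℂ)
    (ht : ∀ j : Fin n, t j = ∑ k : Fin K, (b k : ℂ) * z k ^ (j : ℕ)) :
    (blockM n x t).rank ≤ K :=
  blockM_rank_le_general n K z hz b φ hφ x hx t ht
end

section
/- Let n > K ≥ 1, let z_1,…,z_K ∈ ℂ be pairwise distinct with |z_k| = 1, let b ∈ ℝ^K with b_k > 0, and let φ ∈ ℂ^K with |φ_k| = 1 for all k. Define x ∈ ℂ^{2n−1} by x_j = Σ_{k=1}^K b_k φ_k z_k^{j−1} and t ∈ ℂ^n by t_j = Σ_{k=1}^K b_k z_k^{j−1}. Then rank(𝓣t) = K and rank(𝓜(x,t)) = K; in particular rank(𝓜(x,t)) = rank(𝓣t). -/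
open Matrix
open scoped ComplexOrder

/-!
Let `V` be the `n × K` matrix with columns `(z_k ^ i)_i` and `D = diag b`. Because `|z_k| = 1`,
`z_k ^ i * conj z_k ^ j` is `z_k ^ (i - j)` or `conj z_k ^ (j - i)`, so `𝓣 t = V D Vᴴ`, and
likewise `𝓜(x, t) = G D Gᴴ` with `G = [V(conj z); V diag φ]` (here `|φ_k| = 1` is used in the
lower right block). Since `D` is positive, `rank (G D Gᴴ) = rank G`; and `V`, `G` have rank `K`
because the first `K` rows of `V` form a Vandermonde matrix of the distinct nodes `z_k`.
-/

theorem pow_mul_pow_of_mul_eq_one {M : Type*} [CommMonoid M] {a b : M} (h : a * b = 1)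
    (i j : ℕ) : a ^ i * b ^ j = if j ≤ i then a ^ (i - j) else b ^ (j - i) := by
  split_ifs with hji
  · obtain ⟨d, rfl⟩ := Nat.exists_eq_add_of_le hji
    rw [Nat.add_sub_cancel_left, pow_add, mul_right_comm, ← mul_pow, h, one_pow, one_mul]
  · obtain ⟨d, rfl⟩ := Nat.exists_eq_add_of_le (Nat.le_of_not_le hji)
    rw [Nat.add_sub_cancel_left, pow_add, ← mul_assoc, ← mul_pow, h, one_pow, one_mul]

theorem Complex.mul_star_of_norm_eq_one {w : ℂ} (hw : ‖w‖ = 1) : w * star w = 1 := by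
  rw [Complex.star_def, Complex.mul_conj', hw]; simp

section PowerCols

variable {R ι : Type*}

def powerCols [CommSemiring R] (n : ℕ) (z : ι → R) : Matrix (Fin n) ι R :=
  of fun i k => z k ^ (i : ℕ)

theorem conjTranspose_powerCols [CommSemiring R] [StarRing R] (n : ℕ) (z : ι → R) :
    (powerCols n z)ᴴ = (powerCols n (star z))ᵀ := by
  ext k i; simp [powerCols, star_pow]

theorem rank_powerCols [Field R] {K n : ℕ} {z : Fin K → R} (hz : Function.Injective z)
    (hKn : K ≤ n) : (powerCols n z).rank = K := by
  refine le_antisymm (by simpa using (powerCols n z).rank_le_card_width) ?_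
  have hsub : (powerCols n z).submatrix (Fin.castLE hKn) id = (vandermonde z)ᵀ := by
    ext i k; simp [powerCols, vandermonde]
  calc K = ((vandermonde z)ᵀ).rank := by
        rw [rank_of_det_ne_zero (by rwa [det_transpose, det_vandermonde_ne_zero_iff]),
          Fintype.card_fin]
    _ ≤ (powerCols n z).rank := hsub ▸ rank_submatrix_le _ _ _

theorem hankelOp_eq_powerCols {n : ℕ} [Fintype ι] [DecidableEq ι] {x : Fin (2 * n - 1) → ℂ}
    {z c : ι → ℂ}
    (hx : ∀ j : Fin (2 * n - 1), x j = ∑ k, c k * z k ^ (j : ℕ)) :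
    hankelOp n x = powerCols n z * diagonal c * (powerCols n z)ᵀ := by
  ext i j
  rw [mul_apply]
  simp only [hankelOp, of_apply, hx, mul_diagonal, powerCols, transpose_apply]
  exact Finset.sum_congr rfl fun k _ => by ring

theorem toeplitzOp_eq_powerCols {n : ℕ} [Fintype ι] [DecidableEq ι] {t : Fin n → ℂ} {z : ι → ℂ}
    {b : ι → ℝ}
    (hz : ∀ k, ‖z k‖ = 1) (ht : ∀ j : Fin n, t j = ∑ k, (b k : ℂ) * z k ^ (j : ℕ)) :
    toeplitzOp n t = powerCols n z * diagonal (fun k => (b k : ℂ)) * (powerCols n z)ᴴ := by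
  ext i j
  rw [mul_apply]
  simp only [toeplitzOp, of_apply, mul_diagonal, conjTranspose_apply, powerCols,
    star_pow, mul_comm _ (b _ : ℂ), mul_assoc,
    pow_mul_pow_of_mul_eq_one (Complex.mul_star_of_norm_eq_one (hz _))]
  split_ifs
  · simp [ht]
  · simp [ht, star_sum, star_pow]

end PowerCols

theorem rank_mul_diagonal_mul_conjTranspose {m ι : Type*} [Fintype m] [Fintype ι]
    [DecidableEq ι] (B : Matrix m ι ℂ) {b : ι → ℝ} (hb : ∀ k, 0 < b k) :
    (B * diagonal (fun k => (b k : ℂ)) * Bᴴ).rank = B.rank := by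
  set s : ι → ℂ := fun k => (Real.sqrt (b k) : ℂ)
  have hs : diagonal (fun k => (b k : ℂ)) = diagonal s * diagonal (star s) := by
    rw [diagonal_mul_diagonal]; congr 1; funext k
    simp [s, ← Complex.ofReal_mul, Real.mul_self_sqrt (hb k).le]
  have hfac : B * diagonal (fun k => (b k : ℂ)) * Bᴴ = (B * diagonal s) * (B * diagonal s)ᴴ := by
    rw [conjTranspose_mul, diagonal_conjTranspose, hs]; simp only [Matrix.mul_assoc]
  rw [hfac, rank_self_mul_conjTranspose, rank_mul_eq_left_of_det_ne_zero]
  simp [s, det_diagonal, Finset.prod_ne_zero_iff, Real.sqrt_ne_zero'.mpr (hb _)]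

theorem rank_le_rank_fromRows_right {R m₁ m₂ n : Type*} [Field R] [Fintype n]
    (A₁ : Matrix m₁ n R) (A₂ : Matrix m₂ n R) : A₂.rank ≤ (fromRows A₁ A₂).rank :=
  rank_submatrix_le (fromRows A₁ A₂) Sum.inr id

theorem blockM_eq_fromRows_powerCols {ι : Type*} [Fintype ι] [DecidableEq ι] {n : ℕ}
    {x : Fin (2 * n - 1) → ℂ} {t : Fin n → ℂ} {z φ : ι → ℂ} {b : ι → ℝ}
    (hz : ∀ k, ‖z k‖ = 1) (hφ : ∀ k, ‖φ k‖ = 1)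
    (hx : ∀ j : Fin (2 * n - 1), x j = ∑ k, (b k : ℂ) * φ k * z k ^ (j : ℕ))
    (ht : ∀ j : Fin n, t j = ∑ k, (b k : ℂ) * z k ^ (j : ℕ)) :
    blockM n x t = fromRows (powerCols n (star z)) (powerCols n z * diagonal φ) *
      diagonal (fun k => (b k : ℂ)) *
      (fromRows (powerCols n (star z)) (powerCols n z * diagonal φ))ᴴ := by
  rw [fromRows_mul, conjTranspose_fromRows_eq_fromCols_conjTranspose, fromRows_mul_fromCols,
    blockM]
  congr 1
  · refine toeplitzOp_eq_powerCols (fun k => by simpa using hz k) fun j => ?_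
    simp [ht, star_sum, star_pow]
  · rw [hankelOp_eq_powerCols (z := star z) (c := fun k => b k * star (φ k)) fun j => ?_]
    · conv_rhs => rw [conjTranspose_mul, diagonal_conjTranspose, conjTranspose_powerCols,
        ← Matrix.mul_assoc, Matrix.mul_assoc _ (diagonal _) (diagonal _), diagonal_mul_diagonal]
      rfl
    · simp [hx, star_sum, star_pow]
  · rw [hankelOp_eq_powerCols (z := z) (c := fun k => φ k * b k) fun j => ?_]
    · conv_rhs => rw [conjTranspose_powerCols, star_star, Matrix.mul_assoc (powerCols n z),
        diagonal_mul_diagonal]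
    · simp [hx, mul_comm]
  · have hφ_cancel : diagonal φ * (diagonal (fun k => (b k : ℂ)) * diagonal (star φ)) =
        diagonal (fun k => (b k : ℂ)) := by
      rw [diagonal_mul_diagonal, diagonal_mul_diagonal]
      congr 1; funext k
      rw [Pi.star_apply, mul_left_comm, Complex.mul_star_of_norm_eq_one (hφ k), mul_one]
    rw [toeplitzOp_eq_powerCols hz ht]
    conv_rhs => rw [conjTranspose_mul, diagonal_conjTranspose, ← Matrix.mul_assoc,
      Matrix.mul_assoc _ (diagonal _) (diagonal _), Matrix.mul_assoc (powerCols n z), hφ_cancel]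

theorem blockM_rank_eq_general
    (n K : ℕ) (hKn : K < n)
    (z : Fin K → ℂ) (hz : ∀ k, ‖z k‖ = 1)
    (hz' : Function.Injective z)
    (b : Fin K → ℝ) (hb : ∀ k, 0 < b k)
    (φ : Fin K → ℂ) (hφ : ∀ k, ‖φ k‖ = 1)
    (x : Fin (2 * n - 1) → ℂ)
    (hx : ∀ j : Fin (2 * n - 1), x j = ∑ k : Fin K, (b k : ℂ) * φ k * z k ^ (j : ℕ))
    (t : Fin n → ℂ)
    (ht : ∀ j : Fin n, t j = ∑ k : Fin K, (b k : ℂ) * z k ^ (j : ℕ)) :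
    (toeplitzOp n t).rank = K ∧ (blockM n x t).rank = K
      ∧ (blockM n x t).rank = (toeplitzOp n t).rank := by
  have hV : (powerCols n z).rank = K := rank_powerCols hz' hKn.le
  have hT : (toeplitzOp n t).rank = K := by
    rw [toeplitzOp_eq_powerCols hz ht, rank_mul_diagonal_mul_conjTranspose _ hb, hV]
  have hφ0 : (diagonal φ).det ≠ 0 := by
    simp [det_diagonal, ← norm_ne_zero_iff, hφ]
  have hM : (blockM n x t).rank = K := by
    rw [blockM_eq_fromRows_powerCols hz hφ hx ht, rank_mul_diagonal_mul_conjTranspose _ hb]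
    refine le_antisymm ((rank_le_card_width _).trans_eq (Fintype.card_fin K)) ?_
    calc K = (powerCols n z * diagonal φ).rank := by
          rw [rank_mul_eq_left_of_det_ne_zero _ _ hφ0, hV]
      _ ≤ _ := rank_le_rank_fromRows_right _ _
  exact ⟨hT, hM, hM.trans hT.symm⟩

theorem blockM_rank_eq
    (n K : ℕ) (hK : 1 ≤ K) (hKn : K < n)
    (z : Fin K → ℂ) (hz : ∀ k, ‖z k‖ = 1)
    (hz' : Function.Injective z)
    (b : Fin K → ℝ) (hb : ∀ k, 0 < b k)
    (φ : Fin K → ℂ) (hφ : ∀ k, ‖φ k‖ = 1)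
    (x : Fin (2 * n - 1) → ℂ)
    (hx : ∀ j : Fin (2 * n - 1), x j = ∑ k : Fin K, (b k : ℂ) * φ k * z k ^ (j : ℕ))
    (t : Fin n → ℂ)
    (ht : ∀ j : Fin n, t j = ∑ k : Fin K, (b k : ℂ) * z k ^ (j : ℕ)) :
    (toeplitzOp n t).rank = K ∧ (blockM n x t).rank = K
      ∧ (blockM n x t).rank = (toeplitzOp n t).rank :=
  blockM_rank_eq_general n K hKn z hz hz' b hb φ hφ x hx t ht
end

section
/- Let K ≥ 1, let b ∈ ℝ^K with b_k > 0 for all k, and let S ∈ ℂ^K. If the 2K×2K block matrix [[diag(b), diag(conj(S))],[diag(S), diag(b)]] is positive semidefinite and has rank at most K, then |S_k| = b_k for all k = 1,…,K. -/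
/-!
Since the top-left block `diag(b)` is invertible, block elimination factors the matrix as a
unitriangular matrix, times `diag(b, b - |S|²/b)`, times another unitriangular one. Hence its rank
is `K` plus the number of `k` with `|S_k|² ≠ b_k²`, and rank at most `K` forces `|S_k| = b_k`.
-/

open Matrix
open scoped ComplexOrder

namespace Matrix

variable {𝕜 n : Type*} [Field 𝕜] [Fintype n] [DecidableEq n]

theorem fromBlocks_diagonal_eq_mul_diagonal_mul {a c d e : n → 𝕜} (ha : ∀ i, a i ≠ 0) :
    fromBlocks (diagonal a) (diagonal c) (diagonal d) (diagonal e) =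
      fromBlocks 1 0 (diagonal (d / a)) 1 * diagonal (Sum.elim a (e - d * c / a)) *
        fromBlocks 1 (diagonal (c / a)) 0 1 := by
  rw [← fromBlocks_diagonal]
  simp only [fromBlocks_multiply, diagonal_mul_diagonal, one_mul, mul_one, mul_zero, zero_mul,
    add_zero, zero_add, diagonal_add]
  congr 2 <;> ext1 i <;> simp only [Pi.div_apply, Pi.sub_apply, Pi.mul_apply] <;> field_simp [ha i]
  ring

theorem rank_fromBlocks_diagonal [DecidableEq 𝕜] {a c d e : n → 𝕜} (ha : ∀ i, a i ≠ 0) :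
    (fromBlocks (diagonal a) (diagonal c) (diagonal d) (diagonal e)).rank =
      Fintype.card n + Fintype.card {i // a i * e i ≠ c i * d i} := by
  have hdet (X : Matrix n n 𝕜) :
      IsUnit (fromBlocks 1 0 X 1).det ∧ IsUnit (fromBlocks 1 X 0 1).det := by
    simp
  rw [fromBlocks_diagonal_eq_mul_diagonal_mul ha, rank_mul_eq_left_of_isUnit_det _ _ (hdet _).2,
    rank_mul_eq_right_of_isUnit_det _ _ (hdet _).1, rank_diagonal,
    Fintype.card_congr (Equiv.subtypeSum (p := fun i => Sum.elim a (e - d * c / a) i ≠ 0)),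
    Fintype.card_sum]
  simp only [Sum.elim_inl, Sum.elim_inr, ha, ne_eq, not_false_eq_true, Fintype.card_subtype_true]
  congr 1
  refine Fintype.card_congr (Equiv.subtypeEquivRight fun i => ?_)
  simp only [Pi.sub_apply, Pi.div_apply, Pi.mul_apply]
  rw [sub_eq_zero, eq_div_iff (ha i), mul_comm (e i), mul_comm (d i)]

end Matrix

theorem Complex.norm_eq_of_mul_self_eq_star_mul_self {z : ℂ} {r : ℝ} (hr : 0 ≤ r)
    (h : (r : ℂ) * r = star z * z) : ‖z‖ = r := by
  rw [Complex.star_def, Complex.conj_mul', ← sq, ← Complex.ofReal_pow, ← Complex.ofReal_pow] at h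
  exact (pow_left_inj₀ (norm_nonneg z) hr two_ne_zero).1 (Complex.ofReal_injective h).symm

theorem schur_modulus_eq_general
    (K : ℕ)
    (b : Fin K → ℝ) (hb : ∀ k, 0 < b k)
    (S : Fin K → ℂ)
    (M : Matrix (Fin K ⊕ Fin K) (Fin K ⊕ Fin K) ℂ)
    (hM : M = Matrix.fromBlocks
      (Matrix.diagonal fun k => (b k : ℂ))
      (Matrix.diagonal fun k => star (S k))
      (Matrix.diagonal S)
      (Matrix.diagonal fun k => (b k : ℂ)))
    (hrank : M.rank ≤ K) :
    ∀ k, ‖S k‖ = b k := by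
  classical
  have hb0 (k : Fin K) : (b k : ℂ) ≠ 0 := Complex.ofReal_ne_zero.2 (hb k).ne'
  rw [hM, rank_fromBlocks_diagonal hb0, Fintype.card_fin] at hrank
  have hdefect : IsEmpty {k // (b k : ℂ) * b k ≠ star (S k) * S k} :=
    Fintype.card_eq_zero_iff.1 (by omega)
  intro k
  by_contra hne
  exact hdefect.false ⟨k, fun h => hne (Complex.norm_eq_of_mul_self_eq_star_mul_self (hb k).le h)⟩

theorem schur_modulus_eq
    (K : ℕ) (hK : 1 ≤ K)
    (b : Fin K → ℝ) (hb : ∀ k, 0 < b k)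
    (S : Fin K → ℂ)
    (M : Matrix (Fin K ⊕ Fin K) (Fin K ⊕ Fin K) ℂ)
    (hM : M = Matrix.fromBlocks
      (Matrix.diagonal fun k => (b k : ℂ))
      (Matrix.diagonal fun k => star (S k))
      (Matrix.diagonal S)
      (Matrix.diagonal fun k => (b k : ℂ)))
    (hpsd : M.PosSemidef) (hrank : M.rank ≤ K) :
    ∀ k, ‖S k‖ = b k :=
  schur_modulus_eq_general K b hb S M hM hrank
end

section
/- Let n ≥ K ≥ 1, let z_1,…,z_K ∈ ℂ be pairwise distinct, let c ∈ ℂ^K with c_k ≠ 0 for all k, and let x ∈ ℂ^{2n−1} be defined by x_j = Σ_{k=1}^K c_k z_k^{j−1}. Then the n×n Hankel matrix 𝓗x has rank exactly K. -/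
/-!
With `V = rectVandermonde z 1 n` the `K × n` matrix `(z_k ^ j)`, the hypothesis on `x` says
exactly that `𝓗x = Vᵀ * diag(c) * V`, so the rank is at most `K`. The leading `K × K` block of this product
is `Wᵀ * diag(c) * W` for the square Vandermonde matrix `W` of the distinct nodes `z_k`; it is
invertible, so the rank is at least `K`.
-/

open Matrix

namespace Matrix

variable {R : Type*}

theorem rectVandermonde_one_apply [CommRing R] {α : Type*} (v : α → R) (n : ℕ) (i : α)
    (j : Fin n) : rectVandermonde v 1 n i j = v i ^ (j : ℕ) := by
  simp [rectVandermonde_apply]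

theorem rectVandermonde_one_submatrix_castLE [CommRing R] {K n : ℕ} (hKn : K ≤ n)
    (z : Fin K → R) : (rectVandermonde z 1 n).submatrix id (Fin.castLE hKn) = vandermonde z := by
  ext i j
  simp [rectVandermonde_one_apply]

theorem transpose_mul_diagonal_mul_submatrix [CommSemiring R] {ι κ κ₀ : Type*} [Fintype ι]
    [DecidableEq ι] (A : Matrix ι κ R) (d : ι → R) (f : κ₀ → κ) :
    (Aᵀ * diagonal d * A).submatrix f f = (A.submatrix id f)ᵀ * diagonal d * A.submatrix id f := by
  ext i j
  simp [mul_apply]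

theorem rank_transpose_mul_diagonal_mul_vandermonde [Field R] {K : ℕ} {z : Fin K → R}
    (hz : Function.Injective z) {c : Fin K → R} (hc : ∀ k, c k ≠ 0) :
    ((vandermonde z)ᵀ * diagonal c * vandermonde z).rank = K := by
  have hdet : ((vandermonde z)ᵀ * diagonal c * vandermonde z).det ≠ 0 := by
    rw [det_mul, det_mul, det_transpose, det_diagonal]
    have hV := det_vandermonde_ne_zero_iff.mpr hz
    exact mul_ne_zero (mul_ne_zero hV (Finset.prod_ne_zero_iff.mpr fun k _ => hc k)) hV
  rw [rank_of_isUnit _ ((isUnit_iff_isUnit_det _).mpr hdet.isUnit), Fintype.card_fin]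

theorem rank_transpose_mul_diagonal_mul_rectVandermonde_one [Field R] {K n : ℕ} (hKn : K ≤ n)
    {z : Fin K → R} (hz : Function.Injective z) {c : Fin K → R} (hc : ∀ k, c k ≠ 0) :
    ((rectVandermonde z 1 n)ᵀ * diagonal c * rectVandermonde z 1 n).rank = K := by
  refine le_antisymm ((rank_mul_le_right _ _).trans (rank_le_height _)) ?_
  calc K = ((vandermonde z)ᵀ * diagonal c * vandermonde z).rank :=
        (rank_transpose_mul_diagonal_mul_vandermonde hz hc).symm
    _ = (((rectVandermonde z 1 n)ᵀ * diagonal c * rectVandermonde z 1 n).submatrix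
          (Fin.castLE hKn) (Fin.castLE hKn)).rank := by
        rw [transpose_mul_diagonal_mul_submatrix, rectVandermonde_one_submatrix_castLE]
    _ ≤ _ := rank_submatrix_le _ _ _

end Matrix

theorem hankelOp_eq_transpose_mul_diagonal_mul_rectVandermonde {n K : ℕ} {z c : Fin K → ℂ}
    {x : Fin (2 * n - 1) → ℂ} (hx : ∀ j : Fin (2 * n - 1), x j = ∑ k : Fin K, c k * z k ^ (j : ℕ)) :
    hankelOp n x = (rectVandermonde z 1 n)ᵀ * diagonal c * rectVandermonde z 1 n := by
  ext i j
  rw [mul_apply]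
  simp only [hankelOp, of_apply, hx, mul_diagonal, transpose_apply, rectVandermonde_one_apply,
    pow_add]
  exact Finset.sum_congr rfl fun k _ => by ring

theorem hankel_rank_eq_general
    (n K : ℕ) (hKn : K ≤ n)
    (z : Fin K → ℂ) (hz : Function.Injective z)
    (c : Fin K → ℂ) (hc : ∀ k, c k ≠ 0)
    (x : Fin (2 * n - 1) → ℂ)
    (hx : ∀ j : Fin (2 * n - 1), x j = ∑ k : Fin K, c k * z k ^ (j : ℕ)) :
    (hankelOp n x).rank = K := by
  rw [hankelOp_eq_transpose_mul_diagonal_mul_rectVandermonde hx,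
    rank_transpose_mul_diagonal_mul_rectVandermonde_one hKn hz hc]

theorem hankel_rank_eq
    (n K : ℕ) (hK : 1 ≤ K) (hKn : K ≤ n)
    (z : Fin K → ℂ) (hz : Function.Injective z)
    (c : Fin K → ℂ) (hc : ∀ k, c k ≠ 0)
    (x : Fin (2 * n - 1) → ℂ)
    (hx : ∀ j : Fin (2 * n - 1), x j = ∑ k : Fin K, c k * z k ^ (j : ℕ)) :
    (hankelOp n x).rank = K :=
  hankel_rank_eq_general n K hKn z hz c hc x hx
end

section
/- Let n ≥ 1, L ≥ 1 and let W_1^l, W_3^l ∈ ℂ^{n×n} be Hermitian for l = 1,…,L. Define t* ∈ ℂ^n by t*_a = (1/(2L(n−a+1))) · Σ_{l=1}^L Σ_{(i,j): i−j = a−1} (conj(W_1^l) + W_3^l)_{i,j} for a = 1,…,n. Then for every t ∈ ℂ^n, Σ_{l=1}^L ( ‖𝓣(conj t*) − W_1^l‖_F² + ‖𝓣t* − W_3^l‖_F² ) ≤ Σ_{l=1}^L ( ‖𝓣(conj t) − W_1^l‖_F² + ‖𝓣t − W_3^l‖_F² ). -/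
open Matrix

/-- The Frobenius norm of a complex matrix. -/
noncomputable def frobNorm {m : Type*} [Fintype m] (M : Matrix m m ℂ) : ℝ :=
  Real.sqrt (∑ i, ∑ j, ‖M i j‖ ^ 2)

/-!
Entrywise, `‖𝓣 t - W‖_F²` is the sum over `(i, j)` of `‖t_{|i-j|} - W_{max(i,j), min(i,j)}‖²`
when `W` is Hermitian: in the upper triangle the conjugation of `𝓣 t` cancels against that of
`W`. Since `𝓣 (conj t) = conj (𝓣 t)`, the `W₁`-terms are of the same kind with the Hermitian
targets `conj W₁`. The objective therefore splits into independent least-squares problems, one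
for each coordinate `t_a`, whose targets are the entries of the `a`-th sub- and superdiagonals;
each is minimised by the mean of its targets. The superdiagonal mirrors the subdiagonal, so this
mean is the mean over the subdiagonal alone, which is `t*_a`.
-/

open Finset

section LeastSquares

variable {E : Type*} [NormedAddCommGroup E] [InnerProductSpace ℝ E]

theorem Finset.sum_norm_sub_sq_le_of_sum_sub_eq_zero {ι : Type*} (s : Finset ι) (z : ι → E)
    {m : E} (hm : ∑ p ∈ s, (m - z p) = 0) (x : E) :
    ∑ p ∈ s, ‖m - z p‖ ^ 2 ≤ ∑ p ∈ s, ‖x - z p‖ ^ 2 := by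
  have expand : ∀ p ∈ s,
      ‖x - z p‖ ^ 2 = ‖x - m‖ ^ 2 + 2 * inner ℝ (x - m) (m - z p) + ‖m - z p‖ ^ 2 := by
    intro p _
    rw [← norm_add_sq_real, sub_add_sub_cancel]
  have cross : ∑ p ∈ s, inner ℝ (x - m) (m - z p) = 0 := by
    rw [← inner_sum, hm, inner_zero_right]
  rw [sum_congr rfl expand, sum_add_distrib, sum_add_distrib, ← mul_sum, cross]
  have : 0 ≤ ∑ _p ∈ s, ‖x - m‖ ^ 2 := sum_nonneg fun _ _ => sq_nonneg _
  linarith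

theorem sum_norm_sub_sq_le_of_fiberwise_sum_sub_eq_zero {P A : Type*} [Fintype P] [Fintype A]
    [DecidableEq A] (d : P → A) (z : P → E) {m : A → E}
    (hm : ∀ a, ∑ p with d p = a, (m a - z p) = 0)
    (u : A → E) :
    ∑ p, ‖m (d p) - z p‖ ^ 2 ≤ ∑ p, ‖u (d p) - z p‖ ^ 2 := by
  rw [← sum_fiberwise univ d, ← sum_fiberwise univ d]
  refine sum_le_sum fun a _ => ?_
  have on_fiber : ∀ v : A → E, ∑ p with d p = a, ‖v (d p) - z p‖ ^ 2
      = ∑ p with d p = a, ‖v a - z p‖ ^ 2 :=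
    fun v => sum_congr rfl fun p hp => by rw [(mem_filter.mp hp).2]
  rw [on_fiber, on_fiber]
  exact sum_norm_sub_sq_le_of_sum_sub_eq_zero _ z (hm a) (u a)

end LeastSquares

theorem frobNorm_sq {m : Type*} [Fintype m] (M : Matrix m m ℂ) :
    frobNorm M ^ 2 = ∑ i, ∑ j, ‖M i j‖ ^ 2 :=
  Real.sq_sqrt (by positivity)

theorem frobNorm_map_star_sub {m : Type*} [Fintype m] (M W : Matrix m m ℂ) :
    frobNorm (M.map star - W) = frobNorm (M - W.map star) := by
  have h : ∀ x w : ℂ, ‖star x - w‖ = ‖x - star w‖ := fun x w => by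
    rw [← norm_star, star_sub, star_star]
  simp only [frobNorm, Matrix.sub_apply, Matrix.map_apply, h]

namespace Fin

variable {n : ℕ}

def absDiff (i j : Fin n) : Fin n :=
  ⟨max i.val j.val - min i.val j.val, (Nat.sub_le _ _).trans_lt (max_lt i.isLt j.isLt)⟩

theorem sum_sum_ite_eq_add_val {M : Type*} [AddCommMonoid M] (a : Fin n) (c : M) :
    ∑ i : Fin n, ∑ j : Fin n, (if i.val = j.val + a.val then c else 0) = (n - a.val) • c := by
  rw [sum_comm]
  have inner : ∀ j : Fin n, ∑ i : Fin n, (if i.val = j.val + a.val then c else 0)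
      = if j.val < n - a.val then c else 0 := by
    intro j
    rw [Fin.sum_univ_eq_sum_range (fun k => if k = j.val + a.val then c else 0), sum_ite_eq']
    exact if_congr (by rw [mem_range]; omega) rfl rfl
  rw [sum_congr rfl fun j _ => inner j, sum_ite, sum_const_zero, add_zero, Finset.sum_const,
    card_filter_val_lt, min_eq_right (Nat.sub_le _ _)]

theorem sum_sum_ite_absDiff_eq {M : Type*} [AddCommMonoid M] (a : Fin n)
    (g : Fin n → Fin n → M) :
    ∑ i, ∑ j, (if absDiff i j = a then g (max i j) (min i j) else 0)
      = (if a.val = 0 then 1 else 2) • ∑ i, ∑ j, (if i.val = j.val + a.val then g i j else 0) := by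
  have decompose : ∀ i j, (if absDiff i j = a then g (max i j) (min i j) else 0)
      = (if i.val = j.val + a.val then g i j else 0)
        + (if a.val ≠ 0 ∧ j.val = i.val + a.val then g j i else 0) := by
    intro i j
    have h : absDiff i j = a ↔ max i.val j.val - min i.val j.val = a.val := Fin.ext_iff
    rcases le_or_gt j i with hji | hij
    · rw [max_eq_left hji, min_eq_right hji]
      rw [Fin.le_def] at hji
      by_cases hd : i.val = j.val + a.val
      · rw [if_pos (h.mpr (by omega)), if_pos hd, if_neg (by omega), add_zero]
      · rw [if_neg (fun e => hd (by have := h.mp e; omega)), if_neg hd, if_neg (by omega),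
          add_zero]
    · rw [max_eq_right hij.le, min_eq_left hij.le]
      rw [Fin.lt_def] at hij
      by_cases hd : a.val ≠ 0 ∧ j.val = i.val + a.val
      · rw [if_pos (h.mpr (by omega)), if_pos hd, if_neg (by omega), zero_add]
      · rw [if_neg (fun e => hd (by have := h.mp e; omega)), if_neg hd, if_neg (by omega),
          add_zero]
  simp only [decompose, sum_add_distrib]
  rw [sum_comm (f := fun i j => if a.val ≠ 0 ∧ j.val = i.val + a.val then g j i else 0)]
  by_cases ha : a.val = 0
  · simp [ha]
  · simp only [ha, ne_eq, not_false_eq_true, true_and, if_false, two_nsmul]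

end Fin

theorem toeplitzOp_apply_of_le {n : ℕ} (t : Fin n → ℂ) {i j : Fin n} (h : j ≤ i) :
    toeplitzOp n t i j = t (Fin.absDiff i j) := by
  simp only [toeplitzOp, Matrix.of_apply, if_pos (Fin.le_def.mp h)]
  congr 1
  ext
  simp only [Fin.absDiff]
  omega

theorem toeplitzOp_apply_of_lt {n : ℕ} (t : Fin n → ℂ) {i j : Fin n} (h : i < j) :
    toeplitzOp n t i j = star (t (Fin.absDiff i j)) := by
  simp only [toeplitzOp, Matrix.of_apply, if_neg (not_le.mpr (Fin.lt_def.mp h))]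
  congr 2
  ext
  simp only [Fin.absDiff]
  omega

theorem toeplitzOp_star {n : ℕ} (t : Fin n → ℂ) :
    toeplitzOp n (fun j => star (t j)) = (toeplitzOp n t).map star := by
  ext i j
  simp only [toeplitzOp, Matrix.of_apply, Matrix.map_apply]
  split_ifs <;> rfl

theorem norm_toeplitzOp_sub_apply {n : ℕ} {W : Matrix (Fin n) (Fin n) ℂ} (hW : W.IsHermitian)
    (t : Fin n → ℂ) (i j : Fin n) :
    ‖(toeplitzOp n t - W) i j‖ = ‖t (Fin.absDiff i j) - W (max i j) (min i j)‖ := by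
  rw [Matrix.sub_apply]
  rcases le_or_gt j i with h | h
  · rw [toeplitzOp_apply_of_le t h, max_eq_left h, min_eq_right h]
  · rw [toeplitzOp_apply_of_lt t h, max_eq_right h.le, min_eq_left h.le, ← hW.apply i j,
      ← star_sub, norm_star]

theorem sum_frobNorm_toeplitzOp_sub_sq_le {n : ℕ} {K : Type*} [Fintype K]
    {W : K → Matrix (Fin n) (Fin n) ℂ} (hW : ∀ k, (W k).IsHermitian) {m : Fin n → ℂ}
    (hm : ∀ a : Fin n, ((Fintype.card K * (n - a.val) : ℕ) : ℂ) * m a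
      = ∑ k, ∑ i : Fin n, ∑ j : Fin n, if i.val = j.val + a.val then W k i j else 0)
    (u : Fin n → ℂ) :
    ∑ k, frobNorm (toeplitzOp n m - W k) ^ 2 ≤ ∑ k, frobNorm (toeplitzOp n u - W k) ^ 2 := by
  have entrywise : ∀ t : Fin n → ℂ, ∑ k, frobNorm (toeplitzOp n t - W k) ^ 2
      = ∑ p : K × Fin n × Fin n,
          ‖t (Fin.absDiff p.2.1 p.2.2) - W p.1 (max p.2.1 p.2.2) (min p.2.1 p.2.2)‖ ^ 2 := by
    intro t
    simp only [frobNorm_sq, norm_toeplitzOp_sub_apply (hW _), Fintype.sum_prod_type]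
  rw [entrywise, entrywise]
  refine sum_norm_sub_sq_le_of_fiberwise_sum_sub_eq_zero _ _ (fun a => ?_) u
  have fold : ∀ k, ∑ i, ∑ j,
      (if Fin.absDiff i j = a then m a - W k (max i j) (min i j) else 0)
      = (if a.val = 0 then 1 else 2)
        • ∑ i : Fin n, ∑ j : Fin n, (if i.val = j.val + a.val then m a - W k i j else 0) :=
    fun k => Fin.sum_sum_ite_absDiff_eq a (fun i j => m a - W k i j)
  have sub_sums : ∑ _k : K, ∑ i : Fin n, ∑ j : Fin n, (if i.val = j.val + a.val then m a else 0)
      - ∑ k : K, ∑ i : Fin n, ∑ j : Fin n, (if i.val = j.val + a.val then W k i j else 0)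
      = ∑ k, ∑ i : Fin n, ∑ j : Fin n, (if i.val = j.val + a.val then m a - W k i j else 0) := by
    simp only [← sum_sub_distrib, ite_sub_ite, sub_zero]
  simp only [sum_filter, Fintype.sum_prod_type]
  rw [sum_congr rfl fun k _ => fold k, ← smul_sum, ← sub_sums, Fin.sum_sum_ite_eq_add_val,
    Finset.sum_const, card_univ, ← hm, smul_smul, ← nsmul_eq_mul, sub_self, smul_zero]

theorem toeplitz_multi_snapshot_projection_optimal_general
    (n L : ℕ) (hL : 1 ≤ L)
    (W₁ W₃ : Fin L → Matrix (Fin n) (Fin n) ℂ)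
    (hW₁ : ∀ l, (W₁ l).IsHermitian) (hW₃ : ∀ l, (W₃ l).IsHermitian)
    (tstar : Fin n → ℂ)
    (htstar : ∀ a : Fin n,
      tstar a = ((2 * L * (n - a.val) : ℕ) : ℂ)⁻¹
        * ∑ l : Fin L, ∑ i : Fin n, ∑ j : Fin n,
            if i.val = j.val + a.val then star ((W₁ l) i j) + (W₃ l) i j else 0) :
    ∀ t : Fin n → ℂ,
      (∑ l : Fin L,
        (frobNorm (toeplitzOp n (fun j => star (tstar j)) - W₁ l) ^ 2
          + frobNorm (toeplitzOp n tstar - W₃ l) ^ 2))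
      ≤ ∑ l : Fin L,
        (frobNorm (toeplitzOp n (fun j => star (t j)) - W₁ l) ^ 2
          + frobNorm (toeplitzOp n t - W₃ l) ^ 2) := by
  intro t
  let W : Fin L ⊕ Fin L → Matrix (Fin n) (Fin n) ℂ := Sum.elim (fun l => (W₁ l).map star) W₃
  have objective : ∀ u : Fin n → ℂ, ∑ l : Fin L,
      (frobNorm (toeplitzOp n (fun j => star (u j)) - W₁ l) ^ 2
        + frobNorm (toeplitzOp n u - W₃ l) ^ 2)
      = ∑ k, frobNorm (toeplitzOp n u - W k) ^ 2 := fun u => by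
    simp only [toeplitzOp_star, frobNorm_map_star_sub, Fintype.sum_sum_type, sum_add_distrib, W,
      Sum.elim_inl, Sum.elim_inr]
  rw [objective, objective]
  refine sum_frobNorm_toeplitzOp_sub_sq_le (fun k => ?_) (fun a => ?_) t
  · cases k with
    | inl l => exact (hW₁ l).map star fun _ => rfl
    | inr l => exact hW₃ l
  · have hne : ((2 * L * (n - a.val) : ℕ) : ℂ) ≠ 0 :=
      Nat.cast_ne_zero.mpr (mul_ne_zero (by omega) (by omega))
    rw [Fintype.card_sum, Fintype.card_fin, ← two_mul, htstar a, mul_inv_cancel_left₀ hne,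
      Fintype.sum_sum_type]
    simp only [W, Sum.elim_inl, Sum.elim_inr, Matrix.map_apply, ite_add_zero, sum_add_distrib]

theorem toeplitz_multi_snapshot_projection_optimal
    (n L : ℕ) (hn : 1 ≤ n) (hL : 1 ≤ L)
    (W₁ W₃ : Fin L → Matrix (Fin n) (Fin n) ℂ)
    (hW₁ : ∀ l, (W₁ l).IsHermitian) (hW₃ : ∀ l, (W₃ l).IsHermitian)
    (tstar : Fin n → ℂ)
    (htstar : ∀ a : Fin n,
      tstar a = ((2 * L * (n - a.val) : ℕ) : ℂ)⁻¹
        * ∑ l : Fin L, ∑ i : Fin n, ∑ j : Fin n,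
            if i.val = j.val + a.val then star ((W₁ l) i j) + (W₃ l) i j else 0) :
    ∀ t : Fin n → ℂ,
      (∑ l : Fin L,
        (frobNorm (toeplitzOp n (fun j => star (tstar j)) - W₁ l) ^ 2
          + frobNorm (toeplitzOp n tstar - W₃ l) ^ 2))
      ≤ ∑ l : Fin L,
        (frobNorm (toeplitzOp n (fun j => star (t j)) - W₁ l) ^ 2
          + frobNorm (toeplitzOp n t - W₃ l) ^ 2) :=
  toeplitz_multi_snapshot_projection_optimal_general n L hL W₁ W₃ hW₁ hW₃ tstar htstar
end
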